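/- arXiv:2510.17595 — 5 statements merged into one kernel-verified Lean document; each statement's English description precedes it below -/
import Mathlib

section
/- Let (V,c,p) be an instance of Asymmetric A Priori TSP with a depot d ∈ V (i.e., p(d) = 1), let n := |V| ≥ 1, and set V₁ := {v ∈ V : p(v) ≥ 1/√n} and V₂ := {v ∈ V : p(v) < 1/√n} ∪ {d}, so that V₁ ∪ V₂ = V and V₁ ∩ V₂ = {d}. Let α ≥ 1, let T₁ be a tour on V₁ with c(T₁) ≤ α · TSP(V₁,c), and let T₂ be any tour on V₂. Let T be the tour on V whose cyclic order visits d, then the vertices of V₁∖{d} in the order in which they follow d in T₁, then the vertices of V₂∖{d} in the order in which they follow d in T₂, and returns to d. Then E_{A∼p}[c(T[A])] ≤ (2α + 12) · √n · E_{A∼p}[TSP(A,c)]. -/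
/-!
Fix an active set `A ∋ d`. Short-cutting `T` to `A` costs at most `c(T₁)` plus a round trip
`d → v → d` for every active `v ∈ V₂ \ {d}`, so
`E[c(T[A])] ≤ α · TSP(V₁) + ∑_{v ∈ V₂ \ {d}} p(v) (c(d,v) + c(v,d))`.

For the first term, colour `V₁ \ {d}` uniformly at random with `k = ⌈√n⌉` colours. Gluing optimal
tours of the colour classes at `d` gives `TSP(V₁) ≤ k · E[TSP(d + class)]`, and a colour class is a
random set with probabilities `1/k ≤ p(v)`, so `TSP(V₁) ≤ 2√n · E[TSP(A)]`.

For the second term, a set `U` with `∑_U p ≤ 1/2` has `v` as its only active vertex with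
probability at least `p(v) (1 - ∑_U p)`, and then the active tour pays the round trip to `v`;
hence `∑_U p(v) (c(d,v) + c(v,d)) ≤ 2 E[TSP(A)]`. Cutting `V₂ \ {d}`, of total probability at
most `√n`, into such light groups (and single heavy vertices) gives `(8√n + 2) E[TSP(A)]`.
-/

noncomputable section

/-- The cost of a tour given as a cyclic list: the sum of `c` over consecutive pairs
(cyclically). -/
def cycCost {V : Type*} (c : V → V → ℝ) (l : List V) : ℝ :=
  (List.zipWith c l (l.rotate 1)).sum

/-- `l` is a tour on the finite set `A`: a cyclic ordering of `A`, visiting each element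
exactly once. -/
def IsTour {V : Type*} [DecidableEq V] (A : Finset V) (l : List V) : Prop :=
  l.Nodup ∧ l.toFinset = A

/-- Short-cutting a tour to the set `A` of active vertices. -/
def shortcut {V : Type*} [DecidableEq V] (l : List V) (A : Finset V) : List V :=
  l.filter (fun v => v ∈ A)

/-- The expectation of `f` over the random set of active vertices, where each vertex `v`
is active independently with probability `p v`. -/
def apExpect {V : Type*} [Fintype V] [DecidableEq V] (p : V → ℝ) (f : Finset V → ℝ) : ℝ :=
  ∑ A : Finset V, (∏ v ∈ A, p v) * (∏ v ∈ Aᶜ, (1 - p v)) * f A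

/-- The minimum cost of a tour on `A` with respect to `c`. -/
def TSP {V : Type*} [DecidableEq V] (c : V → V → ℝ) (A : Finset V) : ℝ :=
  sInf {x : ℝ | ∃ l : List V, IsTour A l ∧ x = cycCost c l}

section PathCost

variable {V : Type*} {c : V → V → ℝ}

variable (c) in
def pathCost (a : V) (l : List V) (b : V) : ℝ :=
  (List.zipWith c (a :: l) (l ++ [b])).sum

@[simp] lemma pathCost_nil (a b : V) : pathCost c a [] b = c a b := by
  simp [pathCost]

@[simp] lemma pathCost_cons (a x b : V) (l : List V) :
    pathCost c a (x :: l) b = c a x + pathCost c x l b := by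
  simp [pathCost]

lemma pathCost_nonneg (hc0 : ∀ x y, 0 ≤ c x y) (a b : V) (l : List V) :
    0 ≤ pathCost c a l b := by
  induction l generalizing a with
  | nil => simpa using hc0 a b
  | cons x l ih => simpa using add_nonneg (hc0 a x) (ih x)

lemma le_pathCost (htri : ∀ x y z, c x z ≤ c x y + c y z) (a b : V) (l : List V) :
    c a b ≤ pathCost c a l b := by
  induction l generalizing a with
  | nil => simp
  | cons x l ih => simpa using (htri a x b).trans (add_le_add_right (ih x) _)

lemma add_le_pathCost_of_mem (htri : ∀ x y z, c x z ≤ c x y + c y z) {a b v : V}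
    {l : List V} (hv : v ∈ l) : c a v + c v b ≤ pathCost c a l b := by
  induction l generalizing a with
  | nil => simp at hv
  | cons x l ih =>
    rw [pathCost_cons]
    rcases List.mem_cons.1 hv with rfl | hv
    · exact add_le_add_right (le_pathCost htri v b l) _
    · calc c a v + c v b ≤ c a x + (c x v + c v b) := by linarith [htri a x v]
        _ ≤ c a x + pathCost c x l b := add_le_add_right (ih hv) _

lemma pathCost_le_add_pathCost (htri : ∀ x y z, c x z ≤ c x y + c y z) (a m b : V)
    (l : List V) : pathCost c a l b ≤ c a m + pathCost c m l b := by
  cases l with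
  | nil => simpa using htri a m b
  | cons y l => simp only [pathCost_cons]; linarith [htri a m y]

lemma pathCost_append_le (htri : ∀ x y z, c x z ≤ c x y + c y z) (a m b : V)
    (l₁ l₂ : List V) : pathCost c a (l₁ ++ l₂) b ≤ pathCost c a l₁ m + pathCost c m l₂ b := by
  induction l₁ generalizing a with
  | nil => simpa using pathCost_le_add_pathCost htri a m b l₂
  | cons x l₁ ih => simpa [add_assoc] using ih x

lemma pathCost_le_of_sublist (htri : ∀ x y z, c x z ≤ c x y + c y z) (a b : V)
    {l₁ l₂ : List V} (h : l₁.Sublist l₂) : pathCost c a l₁ b ≤ pathCost c a l₂ b := by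
  induction h generalizing a with
  | slnil => rfl
  | @cons l₁ l₂ x _ ih =>
    rw [pathCost_cons]
    exact (ih a).trans (pathCost_le_add_pathCost htri a x b l₂)
  | cons_cons x _ ih => simpa using ih x

lemma pathCost_le_add_sum (htri : ∀ x y z, c x z ≤ c x y + c y z) (a b : V) (l : List V) :
    pathCost c a l b ≤ c a b + (l.map fun v => c b v + c v b).sum := by
  induction l generalizing a with
  | nil => simp
  | cons x l ih =>
    simp only [pathCost_cons, List.map_cons, List.sum_cons]
    linarith [htri a b x, ih x]

lemma pathCost_append_le_add_sum (htri : ∀ x y z, c x z ≤ c x y + c y z) (a b : V)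
    (l₁ l₂ : List V) :
    pathCost c a (l₁ ++ l₂) b ≤ pathCost c a l₁ b + (l₂.map fun v => c b v + c v b).sum := by
  induction l₁ generalizing a with
  | nil => simpa using pathCost_le_add_sum htri a b l₂
  | cons x l₁ ih => simpa [add_assoc] using ih x

lemma cycCost_cons (a : V) (l : List V) : cycCost c (a :: l) = pathCost c a l a := by
  simp [cycCost, pathCost]

lemma cycCost_rotate (l : List V) (k : ℕ) : cycCost c (l.rotate k) = cycCost c l := by
  rw [cycCost, cycCost, List.rotate_rotate, add_comm, ← List.rotate_rotate,
    ← List.zipWith_rotate_distrib _ _ _ _ (by simp)]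
  exact (List.rotate_perm _ k).sum_eq

lemma cycCost_nonneg (hc0 : ∀ x y, 0 ≤ c x y) (l : List V) : 0 ≤ cycCost c l := by
  cases l with
  | nil => simp [cycCost]
  | cons a l => rw [cycCost_cons]; exact pathCost_nonneg hc0 a a l

lemma cycCost_le_cons (hc0 : ∀ x y, 0 ≤ c x y) (htri : ∀ x y z, c x z ≤ c x y + c y z)
    (a : V) (l : List V) : cycCost c l ≤ cycCost c (a :: l) := by
  cases l with
  | nil => simpa [cycCost_cons, cycCost] using hc0 a a
  | cons x l =>
    rw [← cycCost_rotate (a :: x :: l) 1, show (a :: x :: l).rotate 1 = x :: (l ++ [a]) by simp,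
      cycCost_cons, cycCost_cons]
    exact pathCost_le_of_sublist htri x x (List.sublist_append_left l [a])

lemma cycCost_le_of_sublist (hc0 : ∀ x y, 0 ≤ c x y) (htri : ∀ x y z, c x z ≤ c x y + c y z)
    {l₁ l₂ : List V} (h : l₁.Sublist l₂) : cycCost c l₁ ≤ cycCost c l₂ := by
  induction h with
  | slnil => rfl
  | cons x _ ih => exact ih.trans (cycCost_le_cons hc0 htri x _)
  | cons_cons x h => rw [cycCost_cons, cycCost_cons]; exact pathCost_le_of_sublist htri x x h

end PathCost

section BernoulliExpect

variable {V : Type*} [DecidableEq V] {W U : Finset V} {r r' : V → ℝ} {g g₁ g₂ : Finset V → ℝ}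

def bernoulliExpect (W : Finset V) (r : V → ℝ) (g : Finset V → ℝ) : ℝ :=
  ∑ B ∈ W.powerset, (∏ v ∈ B, r v) * (∏ v ∈ W \ B, (1 - r v)) * g B

@[simp] lemma bernoulliExpect_empty (r : V → ℝ) (g : Finset V → ℝ) :
    bernoulliExpect ∅ r g = g ∅ := by
  simp [bernoulliExpect]

lemma bernoulliExpect_insert {v : V} (hv : v ∉ W) (r : V → ℝ) (g : Finset V → ℝ) :
    bernoulliExpect (insert v W) r g =
      r v * bernoulliExpect W r (fun B => g (insert v B)) + (1 - r v) * bernoulliExpect W r g := by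
  rw [bernoulliExpect, Finset.sum_powerset_insert hv, add_comm, bernoulliExpect, bernoulliExpect,
    Finset.mul_sum, Finset.mul_sum]
  congr 1 <;> refine Finset.sum_congr rfl fun B hB => ?_
  · have hvB : v ∉ B := fun h => hv (Finset.mem_powerset.1 hB h)
    rw [Finset.insert_sdiff_insert, Finset.sdiff_insert_of_notMem hv, Finset.prod_insert hvB]
    ring
  · have hvB : v ∉ B := fun h => hv (Finset.mem_powerset.1 hB h)
    rw [Finset.insert_sdiff_of_notMem _ hvB,
      Finset.prod_insert fun h => hv (Finset.mem_sdiff.1 h).1]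
    ring

lemma bernoulliExpect_congr (h : ∀ B ⊆ W, g₁ B = g₂ B) :
    bernoulliExpect W r g₁ = bernoulliExpect W r g₂ :=
  Finset.sum_congr rfl fun B hB => by rw [h B (Finset.mem_powerset.1 hB)]

lemma bernoulliExpect_const (W : Finset V) (r : V → ℝ) (x : ℝ) :
    bernoulliExpect W r (fun _ => x) = x := by
  induction W using Finset.induction_on with
  | empty => simp
  | insert _ _ hv ih => rw [bernoulliExpect_insert hv, ih]; ring

lemma bernoulliExpect_add (W : Finset V) (r : V → ℝ) (g₁ g₂ : Finset V → ℝ) :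
    bernoulliExpect W r (fun B => g₁ B + g₂ B) =
      bernoulliExpect W r g₁ + bernoulliExpect W r g₂ := by
  simp only [bernoulliExpect, ← Finset.sum_add_distrib, mul_add]

lemma bernoulliExpect_const_mul (W : Finset V) (r : V → ℝ) (x : ℝ) (g : Finset V → ℝ) :
    bernoulliExpect W r (fun B => x * g B) = x * bernoulliExpect W r g := by
  simp only [bernoulliExpect, Finset.mul_sum]
  exact Finset.sum_congr rfl fun B _ => by ring

lemma bernoulliExpect_mono (hr0 : ∀ v ∈ W, 0 ≤ r v) (hr1 : ∀ v ∈ W, r v ≤ 1)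
    (h : ∀ B ⊆ W, g₁ B ≤ g₂ B) : bernoulliExpect W r g₁ ≤ bernoulliExpect W r g₂ := by
  refine Finset.sum_le_sum fun B hB => mul_le_mul_of_nonneg_left (h B (Finset.mem_powerset.1 hB)) ?_
  refine mul_nonneg (Finset.prod_nonneg fun v hv => hr0 v (Finset.mem_powerset.1 hB hv)) ?_
  exact Finset.prod_nonneg fun v hv => sub_nonneg.2 (hr1 v (Finset.mem_sdiff.1 hv).1)

lemma le_bernoulliExpect (hr0 : ∀ v ∈ W, 0 ≤ r v) (hr1 : ∀ v ∈ W, r v ≤ 1) {x : ℝ}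
    (h : ∀ B ⊆ W, x ≤ g B) : x ≤ bernoulliExpect W r g := by
  simpa only [bernoulliExpect_const] using bernoulliExpect_mono hr0 hr1 h

lemma bernoulliExpect_one (W : Finset V) (g : Finset V → ℝ) :
    bernoulliExpect W (fun _ => 1) g = g W := by
  induction W using Finset.induction_on generalizing g with
  | empty => simp
  | insert _ _ hv ih => rw [bernoulliExpect_insert hv, ih, ih]; ring

lemma bernoulliExpect_sdiff (W : Finset V) (r : V → ℝ) (g : Finset V → ℝ) :
    bernoulliExpect W r (fun B => g (W \ B)) = bernoulliExpect W (fun v => 1 - r v) g := by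
  induction W using Finset.induction_on generalizing g with
  | empty => simp
  | @insert v W hv ih =>
    have h₁ : bernoulliExpect W r (fun B => g (insert v W \ insert v B)) =
        bernoulliExpect W r (fun B => g (W \ B)) := by
      simp only [Finset.insert_sdiff_insert, Finset.sdiff_insert_of_notMem hv]
    have h₂ : bernoulliExpect W r (fun B => g (insert v W \ B)) =
        bernoulliExpect W r (fun B => g (insert v (W \ B))) :=
      bernoulliExpect_congr fun B hB => by rw [Finset.insert_sdiff_of_notMem _ fun h => hv (hB h)]
    rw [bernoulliExpect_insert hv, bernoulliExpect_insert hv, h₁, h₂, ih,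
      ih fun B => g (insert v B)]
    ring

lemma bernoulliExpect_bernoulliExpect (W : Finset V) (r s : V → ℝ) (g : Finset V → ℝ) :
    bernoulliExpect W r (fun B => bernoulliExpect B s g) =
      bernoulliExpect W (fun v => r v * s v) g := by
  induction W using Finset.induction_on generalizing g with
  | empty => simp
  | @insert v W hv ih =>
    rw [bernoulliExpect_insert hv, bernoulliExpect_insert hv,
      bernoulliExpect_congr fun B hB => bernoulliExpect_insert (fun h => hv (hB h)) s g,
      bernoulliExpect_add, bernoulliExpect_const_mul, bernoulliExpect_const_mul, ih, ih]
    ring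

lemma bernoulliExpect_mono_prob (hr0 : ∀ v ∈ W, 0 ≤ r v) (hrr' : ∀ v ∈ W, r v ≤ r' v)
    (hr'1 : ∀ v ∈ W, r' v ≤ 1) (hg : ∀ B v, g B ≤ g (insert v B)) :
    bernoulliExpect W r g ≤ bernoulliExpect W r' g := by
  induction W using Finset.induction_on generalizing g with
  | empty => simp
  | @insert v W hv ih =>
    simp only [Finset.forall_mem_insert] at hr0 hrr' hr'1
    have hr1 : ∀ u ∈ W, r u ≤ 1 := fun u hu => (hrr'.2 u hu).trans (hr'1.2 u hu)
    have hg' : ∀ B u, g (insert v B) ≤ g (insert v (insert u B)) := fun B u => by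
      rw [Finset.insert_comm]; exact hg _ u
    have hXY : bernoulliExpect W r g ≤ bernoulliExpect W r (fun B => g (insert v B)) :=
      bernoulliExpect_mono hr0.2 hr1 fun B _ => hg B v
    have hX := ih hr0.2 hrr'.2 hr'1.2 hg'
    have hY := ih hr0.2 hrr'.2 hr'1.2 hg
    rw [bernoulliExpect_insert hv, bernoulliExpect_insert hv]
    nlinarith [mul_le_mul_of_nonneg_left hX (hr0.1.trans hrr'.1),
      mul_le_mul_of_nonneg_left hY (sub_nonneg.2 hr'1.1)]

lemma bernoulliExpect_inter (hWU : W ⊆ U) (r : V → ℝ) (g : Finset V → ℝ) :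
    bernoulliExpect U r (fun B => g (B ∩ W)) = bernoulliExpect W r g := by
  obtain ⟨D, hWD, rfl⟩ : ∃ D, Disjoint W D ∧ U = W ∪ D :=
    ⟨U \ W, Finset.disjoint_sdiff, (Finset.union_sdiff_of_subset hWU).symm⟩
  clear hWU
  induction D using Finset.induction_on with
  | empty =>
    rw [Finset.union_empty]
    exact bernoulliExpect_congr fun B hB => by rw [Finset.inter_eq_left.2 hB]
  | @insert v D hv ih =>
    have hvW : v ∉ W := Finset.disjoint_right.1 hWD (Finset.mem_insert_self v D)
    rw [Finset.union_insert, bernoulliExpect_insert (by simp [hvW, hv])]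
    simp only [Finset.insert_inter_of_notMem hvW]
    rw [ih (hWD.mono_right (Finset.subset_insert v D))]
    ring

lemma mul_one_sub_sum_le_bernoulliExpect {q : V → ℝ} (hr0 : ∀ v ∈ W, 0 ≤ r v)
    (hr1 : ∀ v ∈ W, r v ≤ 1) (hq : ∀ v ∈ W, 0 ≤ q v) (hg0 : ∀ B ⊆ W, 0 ≤ g B)
    (hgq : ∀ v ∈ W, ∀ B ⊆ W, q v ≤ g (insert v B)) :
    (∑ v ∈ W, r v * q v) * (1 - ∑ v ∈ W, r v) ≤ bernoulliExpect W r g := by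
  induction W using Finset.induction_on with
  | empty => simpa using hg0 ∅ subset_rfl
  | @insert v W hv ih =>
    simp only [Finset.forall_mem_insert] at hr0 hr1 hq hgq
    have hsub : W ⊆ insert v W := Finset.subset_insert v W
    have hX : q v ≤ bernoulliExpect W r (fun B => g (insert v B)) :=
      le_bernoulliExpect hr0.2 hr1.2 fun B hB => hgq.1 B (hB.trans hsub)
    have hY := ih hr0.2 hr1.2 hq.2 (fun B hB => hg0 B (hB.trans hsub))
      fun u hu B hB => hgq.2 u hu B (hB.trans hsub)
    have hS : 0 ≤ ∑ u ∈ W, r u * q u :=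
      Finset.sum_nonneg fun u hu => mul_nonneg (hr0.2 u hu) (hq.2 u hu)
    have hM : 0 ≤ ∑ u ∈ W, r u := Finset.sum_nonneg hr0.2
    rw [bernoulliExpect_insert hv, Finset.sum_insert hv, Finset.sum_insert hv]
    nlinarith [mul_le_mul_of_nonneg_left hX hr0.1,
      mul_le_mul_of_nonneg_left hY (sub_nonneg.2 hr1.1),
      mul_nonneg hr0.1 hq.1, mul_nonneg (mul_nonneg hr0.1 hq.1) (add_nonneg hr0.1 hM),
      mul_nonneg hr0.1 (mul_nonneg hS hM)]

end BernoulliExpect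

section Tours

variable {V : Type*} [DecidableEq V] {c : V → V → ℝ} {A B : Finset V} {l : List V} {d v : V}

lemma IsTour.mem_iff (h : IsTour A l) : v ∈ l ↔ v ∈ A := by
  rw [← List.mem_toFinset, h.2]

lemma IsTour.perm_toList (h : IsTour A l) : l.Perm A.toList :=
  List.perm_of_nodup_nodup_toFinset_eq h.1 A.nodup_toList (by rw [h.2, Finset.toList_toFinset])

lemma IsTour.rotate (h : IsTour A l) (k : ℕ) : IsTour A (l.rotate k) :=
  ⟨(l.rotate_perm k).nodup_iff.2 h.1, by rw [List.toFinset_eq_of_perm _ _ (l.rotate_perm k), h.2]⟩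

lemma IsTour.filter_mem (h : IsTour A l) (hBA : B ⊆ A) : IsTour B (l.filter (· ∈ B)) := by
  refine ⟨h.1.filter _, ?_⟩
  ext x
  simpa [h.mem_iff] using fun hx => hBA hx

variable (c) in
lemma finite_tourCosts (A : Finset V) :
    {x : ℝ | ∃ l : List V, IsTour A l ∧ x = cycCost c l}.Finite := by
  refine (A.toList.permutations.map (cycCost c)).finite_toSet.subset ?_
  rintro _ ⟨l, hl, rfl⟩
  exact List.mem_map_of_mem (List.mem_permutations.2 hl.perm_toList)

variable (c) in
lemma exists_isTour_cycCost_eq_TSP (A : Finset V) : ∃ l, IsTour A l ∧ cycCost c l = TSP c A := by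
  have hne : {x : ℝ | ∃ l : List V, IsTour A l ∧ x = cycCost c l}.Nonempty :=
    ⟨_, A.toList, ⟨A.nodup_toList, A.toList_toFinset⟩, rfl⟩
  obtain ⟨l, hl, h⟩ := hne.csInf_mem (finite_tourCosts c A)
  exact ⟨l, hl, h.symm⟩

lemma TSP_le_cycCost (h : IsTour A l) : TSP c A ≤ cycCost c l :=
  csInf_le (finite_tourCosts c A).bddBelow ⟨l, h, rfl⟩

lemma TSP_nonneg (hc0 : ∀ x y, 0 ≤ c x y) (A : Finset V) : 0 ≤ TSP c A := by
  obtain ⟨l, -, hl⟩ := exists_isTour_cycCost_eq_TSP c A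
  exact hl ▸ cycCost_nonneg hc0 l

lemma TSP_mono (hc0 : ∀ x y, 0 ≤ c x y) (htri : ∀ x y z, c x z ≤ c x y + c y z)
    (hBA : B ⊆ A) : TSP c B ≤ TSP c A := by
  obtain ⟨l, hl, hcost⟩ := exists_isTour_cycCost_eq_TSP c A
  calc TSP c B ≤ cycCost c (l.filter (· ∈ B)) := TSP_le_cycCost (hl.filter_mem hBA)
    _ ≤ cycCost c l := cycCost_le_of_sublist hc0 htri List.filter_sublist
    _ = TSP c A := hcost

def tailFrom (d : V) (l : List V) : List V :=
  (l.rotate (l.idxOf d)).tail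

lemma rotate_idxOf_eq_cons_tailFrom (hd : d ∈ l) : l.rotate (l.idxOf d) = d :: tailFrom d l := by
  have hi : l.idxOf d < l.length := List.idxOf_lt_length_iff.2 hd
  rw [tailFrom, List.rotate_eq_drop_append_take hi.le, List.drop_eq_getElem_cons hi,
    List.getElem_idxOf hi, List.cons_append, List.tail_cons]

lemma cycCost_cons_tailFrom (hd : d ∈ l) : cycCost c (d :: tailFrom d l) = cycCost c l := by
  rw [← rotate_idxOf_eq_cons_tailFrom hd, cycCost_rotate]

lemma IsTour.tailFrom (h : IsTour A l) (hd : d ∈ A) : IsTour (A.erase d) (tailFrom d l) := by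
  have hrot := h.rotate (l.idxOf d)
  rw [rotate_idxOf_eq_cons_tailFrom (h.mem_iff.2 hd)] at hrot
  obtain ⟨hnd, htf⟩ := hrot
  refine ⟨hnd.of_cons, ?_⟩
  rw [← htf, List.toFinset_cons, Finset.erase_insert (by simpa using (List.nodup_cons.1 hnd).1)]

lemma add_le_TSP (htri : ∀ x y z, c x z ≤ c x y + c y z) (hvA : v ∈ A) (hdA : d ∈ A)
    (hvd : v ≠ d) : c d v + c v d ≤ TSP c A := by
  obtain ⟨l, hl, hcost⟩ := exists_isTour_cycCost_eq_TSP c A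
  have hv : v ∈ tailFrom d l := (hl.tailFrom hdA).mem_iff.2 (Finset.mem_erase.2 ⟨hvd, hvA⟩)
  rw [← hcost, ← cycCost_cons_tailFrom (hl.mem_iff.2 hdA), cycCost_cons]
  exact add_le_pathCost_of_mem htri hv

lemma TSP_insert_union_le (htri : ∀ x y z, c x z ≤ c x y + c y z) (hdA : d ∉ A) (hdB : d ∉ B)
    (hAB : Disjoint A B) : TSP c (insert d (A ∪ B)) ≤ TSP c (insert d A) + TSP c (insert d B) := by
  obtain ⟨l₁, hl₁, hcost₁⟩ := exists_isTour_cycCost_eq_TSP c (insert d A)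
  obtain ⟨l₂, hl₂, hcost₂⟩ := exists_isTour_cycCost_eq_TSP c (insert d B)
  have ht₁ := hl₁.tailFrom (Finset.mem_insert_self d A)
  have ht₂ := hl₂.tailFrom (Finset.mem_insert_self d B)
  rw [Finset.erase_insert hdA] at ht₁
  rw [Finset.erase_insert hdB] at ht₂
  have htour : IsTour (insert d (A ∪ B)) (d :: (tailFrom d l₁ ++ tailFrom d l₂)) := by
    have hdisj : (tailFrom d l₁).Disjoint (tailFrom d l₂) := fun x hx₁ hx₂ =>
      Finset.disjoint_left.1 hAB (ht₁.mem_iff.1 hx₁) (ht₂.mem_iff.1 hx₂)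
    refine ⟨List.nodup_cons.2 ⟨?_, ht₁.1.append ht₂.1 hdisj⟩, ?_⟩
    · simp [ht₁.mem_iff, ht₂.mem_iff, hdA, hdB]
    · rw [List.toFinset_cons, List.toFinset_append, ht₁.2, ht₂.2]
  calc TSP c (insert d (A ∪ B)) ≤ cycCost c (d :: (tailFrom d l₁ ++ tailFrom d l₂)) :=
        TSP_le_cycCost htour
    _ ≤ cycCost c (d :: tailFrom d l₁) + cycCost c (d :: tailFrom d l₂) := by
        simpa only [cycCost_cons] using pathCost_append_le htri d d d _ _
    _ = TSP c (insert d A) + TSP c (insert d B) := by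
        rw [cycCost_cons_tailFrom (hl₁.mem_iff.2 (Finset.mem_insert_self d A)),
          cycCost_cons_tailFrom (hl₂.mem_iff.2 (Finset.mem_insert_self d B)), hcost₁, hcost₂]

lemma TSP_insert_le_mul_bernoulliExpect (htri : ∀ x y z, c x z ≤ c x y + c y z) {k : ℕ}
    (hk : 1 ≤ k) {W : Finset V} (hdW : d ∉ W) :
    TSP c (insert d W) ≤
      k * bernoulliExpect W (fun _ => (k : ℝ)⁻¹) (fun B => TSP c (insert d B)) := by
  induction k, hk using Nat.le_induction generalizing W with
  | base => simp [bernoulliExpect_one]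
  | succ k hk ih =>
    set g : Finset V → ℝ := fun B => TSP c (insert d B)
    have hk0 : (0 : ℝ) < k := by exact_mod_cast hk
    have hsplit : ∀ A ⊆ W, g W ≤ g (W \ A) + k * bernoulliExpect A (fun _ => (k : ℝ)⁻¹) g := by
      intro A hA
      have h := TSP_insert_union_le (c := c) htri (fun h => hdW (Finset.sdiff_subset h))
        (fun h => hdW (hA h)) Finset.sdiff_disjoint
      rw [Finset.sdiff_union_of_subset hA] at h
      linarith [ih fun h => hdW (hA h)]
    -- Average `hsplit` over a random `A ⊆ W` of density `k / (k + 1)`: both `W \ A` and the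
    -- colour classes into which `ih` splits `A` are then random sets of density `1 / (k + 1)`.
    obtain ⟨a, ha⟩ : ∃ a : ℝ, a = k / (k + 1) := ⟨_, rfl⟩
    have ha0 : 0 ≤ a := ha ▸ by positivity
    have ha1 : a ≤ 1 := ha ▸ (div_le_one (by linarith)).2 (by linarith)
    have h₁ : (fun _ : V => 1 - a) = fun _ => ((k + 1 : ℕ) : ℝ)⁻¹ := by
      ext; rw [ha]; push_cast; field_simp; ring
    have h₂ : (fun v : V => (fun _ => a) v * (fun _ => (k : ℝ)⁻¹) v) =
        fun _ => ((k + 1 : ℕ) : ℝ)⁻¹ := by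
      ext; rw [ha]; push_cast; field_simp
    calc g W = bernoulliExpect W (fun _ => a) (fun _ => g W) := (bernoulliExpect_const ..).symm
      _ ≤ bernoulliExpect W (fun _ => a)
            (fun A => g (W \ A) + k * bernoulliExpect A (fun _ => (k : ℝ)⁻¹) g) :=
          bernoulliExpect_mono (fun _ _ => ha0) (fun _ _ => ha1) hsplit
      _ = (k + 1 : ℕ) * bernoulliExpect W (fun _ => ((k + 1 : ℕ) : ℝ)⁻¹) g := by
          rw [bernoulliExpect_add, bernoulliExpect_const_mul, bernoulliExpect_sdiff,
            bernoulliExpect_bernoulliExpect, h₁, h₂]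
          push_cast; ring

end Tours

section APrioriExpect

variable {V : Type*} [Fintype V] [DecidableEq V] {p : V → ℝ} {f g : Finset V → ℝ} {d : V}

lemma apExpect_eq_bernoulliExpect (p : V → ℝ) (f : Finset V → ℝ) :
    apExpect p f = bernoulliExpect Finset.univ p f := by
  rw [apExpect, bernoulliExpect, Finset.powerset_univ]
  exact Finset.sum_congr rfl fun A _ => by rw [Finset.compl_eq_univ_sdiff]

lemma apExpect_const (p : V → ℝ) (x : ℝ) : apExpect p (fun _ => x) = x := by
  rw [apExpect_eq_bernoulliExpect, bernoulliExpect_const]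

lemma apExpect_add (p : V → ℝ) (f g : Finset V → ℝ) :
    apExpect p (fun A => f A + g A) = apExpect p f + apExpect p g := by
  simp only [apExpect_eq_bernoulliExpect, bernoulliExpect_add]

lemma apExpect_nonneg (hp0 : ∀ v, 0 ≤ p v) (hp1 : ∀ v, p v ≤ 1) (hf : ∀ A, 0 ≤ f A) :
    0 ≤ apExpect p f := by
  rw [apExpect_eq_bernoulliExpect]
  exact le_bernoulliExpect (fun v _ => hp0 v) (fun v _ => hp1 v) fun A _ => hf A

lemma apExpect_mono_of_mem (hp0 : ∀ v, 0 ≤ p v) (hp1 : ∀ v, p v ≤ 1) (hd : p d = 1)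
    (h : ∀ A, d ∈ A → f A ≤ g A) : apExpect p f ≤ apExpect p g := by
  refine Finset.sum_le_sum fun A _ => ?_
  by_cases hdA : d ∈ A
  · refine mul_le_mul_of_nonneg_left (h A hdA) (mul_nonneg ?_ ?_)
    · exact Finset.prod_nonneg fun v _ => hp0 v
    · exact Finset.prod_nonneg fun v _ => sub_nonneg.2 (hp1 v)
  · have hzero : ∏ v ∈ Aᶜ, (1 - p v) = 0 :=
      Finset.prod_eq_zero (Finset.mem_compl.2 hdA) (by rw [hd, sub_self])
    simp [hzero]

lemma apExpect_ite_mem (p : V → ℝ) (v : V) (y : ℝ) :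
    apExpect p (fun A => if v ∈ A then y else 0) = p v * y := by
  have h : (fun A : Finset V => if v ∈ A then y else 0) =
      fun A => (fun B => if v ∈ B then y else 0) (A ∩ {v}) := by
    ext A; simp
  rw [apExpect_eq_bernoulliExpect, h,
    bernoulliExpect_inter (Finset.subset_univ {v}) p fun B => if v ∈ B then y else 0,
    ← insert_empty_eq v, bernoulliExpect_insert (Finset.notMem_empty v)]
  simp

lemma apExpect_sum_filter_mem (p : V → ℝ) (W : Finset V) (q : V → ℝ) :
    apExpect p (fun A => ∑ v ∈ W.filter (· ∈ A), q v) = ∑ v ∈ W, p v * q v := by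
  simp only [apExpect, Finset.sum_filter, Finset.mul_sum]
  rw [Finset.sum_comm]
  refine Finset.sum_congr rfl fun v _ => ?_
  simpa only [apExpect] using apExpect_ite_mem p v (q v)

end APrioriExpect

section FinsetSums

variable {ι : Type*} [DecidableEq ι]

lemma exists_subset_sum_mem_Icc (s : Finset ι) (w : ι → ℝ) {δ : ℝ} (hδ : 0 ≤ δ)
    (hw : ∀ i ∈ s, w i ≤ δ) (hs : δ ≤ ∑ i ∈ s, w i) :
    ∃ t ⊆ s, δ ≤ ∑ i ∈ t, w i ∧ ∑ i ∈ t, w i ≤ 2 * δ := by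
  induction s using Finset.induction_on with
  | empty => exact ⟨∅, subset_rfl, hs, by simpa using hδ⟩
  | @insert i s hi ih =>
    rw [Finset.forall_mem_insert] at hw
    by_cases hδ : δ ≤ ∑ j ∈ s, w j
    · obtain ⟨t, hts, ht⟩ := ih hw.2 hδ
      exact ⟨t, hts.trans (Finset.subset_insert i s), ht⟩
    · refine ⟨insert i s, subset_rfl, hs, ?_⟩
      rw [Finset.sum_insert hi]
      linarith [hw.1]

lemma sum_le_of_forall_light_subset (s : Finset ι) {w a : ι → ℝ} {E : ℝ}
    (hw : ∀ i ∈ s, 0 ≤ w i) (hE : 0 ≤ E) (hsingle : ∀ i ∈ s, a i ≤ E)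
    (hlight : ∀ t ⊆ s, ∑ i ∈ t, w i ≤ 1 / 2 → ∑ i ∈ t, a i ≤ 2 * E) :
    ∑ i ∈ s, a i ≤ (8 * ∑ i ∈ s, w i + 2) * E := by
  induction s using Finset.strongInduction with
  | H s ih =>
    have hW : 0 ≤ ∑ i ∈ s, w i := Finset.sum_nonneg hw
    by_cases hlight_s : ∑ i ∈ s, w i ≤ 1 / 2
    · nlinarith [hlight s subset_rfl hlight_s]
    by_cases hheavy : ∃ i ∈ s, 1 / 4 < w i
    · obtain ⟨i, hi, hwi⟩ := hheavy
      have h := ih (s.erase i) (Finset.erase_ssubset hi)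
        (fun j hj => hw j (Finset.mem_of_mem_erase hj))
        (fun j hj => hsingle j (Finset.mem_of_mem_erase hj))
        fun t ht => hlight t (ht.trans (Finset.erase_subset i s))
      rw [← Finset.sum_erase_add s a hi, ← Finset.sum_erase_add s w hi]
      nlinarith [hsingle i hi]
    push Not at hlight_s hheavy
    obtain ⟨t, hts, ht⟩ := exists_subset_sum_mem_Icc s w (by norm_num) hheavy (by linarith)
    have htne : t.Nonempty := Finset.nonempty_iff_ne_empty.2 fun h => by simp [h] at ht; linarith
    have h := ih (s \ t) (Finset.sdiff_ssubset hts htne) (fun j hj => hw j (Finset.sdiff_subset hj))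
      (fun j hj => hsingle j (Finset.sdiff_subset hj))
      fun u hu => hlight u (hu.trans Finset.sdiff_subset)
    rw [← Finset.sum_sdiff hts (f := a), ← Finset.sum_sdiff hts (f := w)]
    nlinarith [hlight t hts (by linarith)]

lemma sum_le_sqrt_card {ι : Type*} [Fintype ι] (s : Finset ι) {w : ι → ℝ}
    (hw : ∀ i ∈ s, w i ≤ (√(Fintype.card ι))⁻¹) : ∑ i ∈ s, w i ≤ √(Fintype.card ι) :=
  calc ∑ i ∈ s, w i ≤ s.card * (√(Fintype.card ι))⁻¹ := by
        simpa using Finset.sum_le_card_nsmul _ _ _ hw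
    _ ≤ Fintype.card ι * (√(Fintype.card ι))⁻¹ := by
        gcongr; exact_mod_cast Finset.card_le_univ s
    _ = √(Fintype.card ι) := by rw [← div_eq_mul_inv, Real.div_sqrt]

end FinsetSums

section ExpectedTSP

variable {V : Type*} [Fintype V] [DecidableEq V] {c : V → V → ℝ} {p : V → ℝ} {d : V}

lemma bernoulliExpect_TSP_insert_le_apExpect (hc0 : ∀ x y, 0 ≤ c x y)
    (htri : ∀ x y z, c x z ≤ c x y + c y z) (hp0 : ∀ v, 0 ≤ p v) (hp1 : ∀ v, p v ≤ 1)
    (hd : p d = 1) (W : Finset V) :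
    bernoulliExpect W p (fun B => TSP c (insert d B)) ≤ apExpect p (TSP c) := by
  rw [← bernoulliExpect_inter (Finset.subset_univ W), ← apExpect_eq_bernoulliExpect]
  exact apExpect_mono_of_mem hp0 hp1 hd fun A hdA =>
    TSP_mono hc0 htri (Finset.insert_subset hdA Finset.inter_subset_left)

lemma TSP_insert_le_div_mul_apExpect (hc0 : ∀ x y, 0 ≤ c x y)
    (htri : ∀ x y z, c x z ≤ c x y + c y z) (hp0 : ∀ v, 0 ≤ p v) (hp1 : ∀ v, p v ≤ 1)
    (hd : p d = 1) {q : ℝ} (hq0 : 0 < q) (hq1 : q ≤ 1) {W : Finset V} (hdW : d ∉ W)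
    (hW : ∀ v ∈ W, q ≤ p v) : TSP c (insert d W) ≤ 2 / q * apExpect p (TSP c) := by
  set k := ⌈q⁻¹⌉₊
  have hk : 1 ≤ k := Nat.one_le_iff_ne_zero.2 (Nat.ceil_pos.2 (inv_pos.2 hq0)).ne'
  have hk0 : (0 : ℝ) < k := by exact_mod_cast hk
  have hqk : q⁻¹ ≤ k := Nat.le_ceil _
  have hk2 : (k : ℝ) ≤ 2 / q := by
    have h1 : 1 ≤ q⁻¹ := (one_le_inv₀ hq0).2 hq1
    have h2 : (k : ℝ) < q⁻¹ + 1 := Nat.ceil_lt_add_one (inv_nonneg.2 hq0.le)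
    rw [div_eq_mul_inv]; linarith
  calc TSP c (insert d W)
      ≤ k * bernoulliExpect W (fun _ => (k : ℝ)⁻¹) (fun B => TSP c (insert d B)) :=
        TSP_insert_le_mul_bernoulliExpect htri hk hdW
    _ ≤ k * bernoulliExpect W p (fun B => TSP c (insert d B)) := by
        gcongr
        refine bernoulliExpect_mono_prob (fun _ _ => by positivity)
          (fun v hv => ((inv_le_comm₀ hk0 hq0).2 hqk).trans (hW v hv)) (fun v _ => hp1 v)
          fun B v => TSP_mono hc0 htri (Finset.insert_subset_insert d (Finset.subset_insert v B))
    _ ≤ k * apExpect p (TSP c) := by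
        gcongr; exact bernoulliExpect_TSP_insert_le_apExpect hc0 htri hp0 hp1 hd W
    _ ≤ 2 / q * apExpect p (TSP c) := by
        gcongr; exact apExpect_nonneg hp0 hp1 (TSP_nonneg hc0)

lemma mul_add_le_apExpect (hc0 : ∀ x y, 0 ≤ c x y) (htri : ∀ x y z, c x z ≤ c x y + c y z)
    (hp0 : ∀ v, 0 ≤ p v) (hp1 : ∀ v, p v ≤ 1) (hd : p d = 1) {v : V} (hvd : v ≠ d) :
    p v * (c d v + c v d) ≤ apExpect p (TSP c) := by
  rw [← apExpect_ite_mem]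
  refine apExpect_mono_of_mem hp0 hp1 hd fun A hdA => ?_
  split_ifs with hvA
  · exact add_le_TSP htri hvA hdA hvd
  · exact TSP_nonneg hc0 A

lemma sum_mul_add_le_two_mul_apExpect (hc0 : ∀ x y, 0 ≤ c x y)
    (htri : ∀ x y z, c x z ≤ c x y + c y z) (hp0 : ∀ v, 0 ≤ p v) (hp1 : ∀ v, p v ≤ 1)
    (hd : p d = 1) {U : Finset V} (hdU : d ∉ U) (hU : ∑ v ∈ U, p v ≤ 1 / 2) :
    ∑ v ∈ U, p v * (c d v + c v d) ≤ 2 * apExpect p (TSP c) := by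
  have h := mul_one_sub_sum_le_bernoulliExpect (W := U) (r := p)
    (g := fun B => TSP c (insert d B)) (fun v _ => hp0 v) (fun v _ => hp1 v)
    (fun v _ => add_nonneg (hc0 d v) (hc0 v d)) (fun B _ => TSP_nonneg hc0 _)
    fun v hv B _ => add_le_TSP htri (Finset.mem_insert_of_mem (Finset.mem_insert_self v B))
      (Finset.mem_insert_self d _) (ne_of_mem_of_not_mem hv hdU)
  have hS : 0 ≤ ∑ v ∈ U, p v * (c d v + c v d) :=
    Finset.sum_nonneg fun v _ => mul_nonneg (hp0 v) (add_nonneg (hc0 d v) (hc0 v d))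
  nlinarith [bernoulliExpect_TSP_insert_le_apExpect hc0 htri hp0 hp1 hd U]

lemma sum_mul_add_le_apExpect (hc0 : ∀ x y, 0 ≤ c x y) (htri : ∀ x y z, c x z ≤ c x y + c y z)
    (hp0 : ∀ v, 0 ≤ p v) (hp1 : ∀ v, p v ≤ 1) (hd : p d = 1) {W : Finset V} (hdW : d ∉ W) :
    ∑ v ∈ W, p v * (c d v + c v d) ≤ (8 * ∑ v ∈ W, p v + 2) * apExpect p (TSP c) :=
  sum_le_of_forall_light_subset W (fun v _ => hp0 v) (apExpect_nonneg hp0 hp1 (TSP_nonneg hc0))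
    (fun _ hv => mul_add_le_apExpect hc0 htri hp0 hp1 hd (ne_of_mem_of_not_mem hv hdW))
    fun _ hU => sum_mul_add_le_two_mul_apExpect hc0 htri hp0 hp1 hd fun h => hdW (hU h)

end ExpectedTSP

section Shortcut

variable {V : Type*} [DecidableEq V] {c : V → V → ℝ} {d : V}

lemma cycCost_shortcut_cons_append_le (hc0 : ∀ x y, 0 ≤ c x y)
    (htri : ∀ x y z, c x z ≤ c x y + c y z) {T₁ T₂ : List V} {V₂ A : Finset V} (hd₁ : d ∈ T₁)
    (hT₂ : IsTour V₂ T₂) (hd₂ : d ∈ V₂) (hdA : d ∈ A) :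
    cycCost c (shortcut (d :: (tailFrom d T₁ ++ tailFrom d T₂)) A) ≤
      cycCost c T₁ + ∑ v ∈ (V₂.erase d).filter (· ∈ A), (c d v + c v d) := by
  set t₁ := (tailFrom d T₁).filter (· ∈ A)
  set t₂ := (tailFrom d T₂).filter (· ∈ A)
  have ht₂ := hT₂.tailFrom hd₂
  have hsum : (t₂.map fun v => c d v + c v d).sum =
      ∑ v ∈ (V₂.erase d).filter (· ∈ A), (c d v + c v d) := by
    rw [← List.sum_toFinset _ (ht₂.1.filter _), List.toFinset_filter, ht₂.2]
    simp
  have h₁ : pathCost c d t₁ d ≤ cycCost c T₁ := by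
    rw [← cycCost_cons, ← cycCost_cons_tailFrom hd₁]
    exact cycCost_le_of_sublist hc0 htri (List.filter_sublist.cons_cons d)
  rw [shortcut, List.filter_cons_of_pos (by simpa), List.filter_append, cycCost_cons, ← hsum]
  linarith [pathCost_append_le_add_sum htri d d t₁ t₂]

end Shortcut

theorem statement12_general {V : Type*} [Fintype V] [DecidableEq V]
    (c : V → V → ℝ) (p : V → ℝ)
    (hc0 : ∀ x y, 0 ≤ c x y)
    (htri : ∀ x y z, c x z ≤ c x y + c y z)
    (hp0 : ∀ v, 0 ≤ p v) (hp1 : ∀ v, p v ≤ 1)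
    (d : V) (hd : p d = 1)
    (V₁ V₂ : Finset V)
    (hV₁ : V₁ = Finset.univ.filter (fun v => 1 / Real.sqrt (Fintype.card V) ≤ p v))
    (hV₂ : V₂ = Finset.univ.filter (fun v => p v < 1 / Real.sqrt (Fintype.card V)) ∪ {d})
    (α : ℝ) (hα : 1 ≤ α)
    (T₁ : List V) (hT₁ : IsTour V₁ T₁) (hT₁apx : cycCost c T₁ ≤ α * TSP c V₁)
    (T₂ : List V) (hT₂ : IsTour V₂ T₂)
    (T : List V)
    (hT : T = d :: ((T₁.rotate (T₁.idxOf d)).tail ++ (T₂.rotate (T₂.idxOf d)).tail)) :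
    apExpect p (fun A => cycCost c (shortcut T A)) ≤
      (2 * α + 12) * Real.sqrt (Fintype.card V) * apExpect p (fun A => TSP c A) := by
  set s := Real.sqrt (Fintype.card V)
  set E := apExpect p (fun A => TSP c A)
  have hs : 1 ≤ s := Real.one_le_sqrt.2 (by exact_mod_cast Fintype.card_pos_iff.2 ⟨d⟩)
  have hE : 0 ≤ E := apExpect_nonneg hp0 hp1 (TSP_nonneg hc0)
  have hd₁ : d ∈ V₁ := by simpa [hV₁, hd] using inv_le_one_of_one_le₀ hs
  have hd₂ : d ∈ V₂ := by simp [hV₂]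
  have hV₁E : TSP c V₁ ≤ 2 * s * E := by
    have h := TSP_insert_le_div_mul_apExpect hc0 htri hp0 hp1 hd (inv_pos.2 (by linarith))
      (inv_le_one_of_one_le₀ hs) (Finset.notMem_erase d V₁)
      fun v hv => by simpa [hV₁] using (Finset.mem_of_mem_erase hv)
    rwa [Finset.insert_erase hd₁, div_inv_eq_mul] at h
  have hV₂E : ∑ v ∈ V₂.erase d, p v * (c d v + c v d) ≤ (8 * s + 2) * E := by
    have hp : ∑ v ∈ V₂.erase d, p v ≤ s := sum_le_sqrt_card _ fun v hv => by
      have := Finset.mem_erase.1 hv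
      simp only [hV₂, Finset.mem_union, Finset.mem_filter, Finset.mem_singleton, one_div] at this
      exact (this.2.resolve_right this.1).2.le
    exact (sum_mul_add_le_apExpect hc0 htri hp0 hp1 hd (Finset.notMem_erase d V₂)).trans
      (by gcongr)
  calc apExpect p (fun A => cycCost c (shortcut T A))
      ≤ apExpect p (fun A => cycCost c T₁ + ∑ v ∈ (V₂.erase d).filter (· ∈ A), (c d v + c v d)) :=
        apExpect_mono_of_mem hp0 hp1 hd fun A hdA => hT ▸
          cycCost_shortcut_cons_append_le hc0 htri (hT₁.mem_iff.2 hd₁) hT₂ hd₂ hdA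
    _ = cycCost c T₁ + ∑ v ∈ V₂.erase d, p v * (c d v + c v d) := by
        rw [apExpect_add, apExpect_const, apExpect_sum_filter_mem]
    _ ≤ α * (2 * s * E) + (8 * s + 2) * E :=
        add_le_add (hT₁apx.trans (by gcongr)) hV₂E
    _ ≤ (2 * α + 12) * s * E := by nlinarith

/-- splitting the vertices into those with large (`≥ 1/√n`) and small
(`< 1/√n`) activation probability, concatenating an `α`-approximate ATSP tour on `V₁` with
any tour on `V₂` (both joined at the depot `d`) gives an a priori tour whose expected
short-cut cost is at most `(2α+12)·√n·E[TSP(A,c)]`. -/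
theorem statement12 {V : Type*} [Fintype V] [DecidableEq V]
    (c : V → V → ℝ) (p : V → ℝ)
    (hc0 : ∀ x y, 0 ≤ c x y)
    (hcrefl : ∀ v, c v v = 0)
    (htri : ∀ x y z, c x z ≤ c x y + c y z)
    (hp0 : ∀ v, 0 ≤ p v) (hp1 : ∀ v, p v ≤ 1)
    (d : V) (hd : p d = 1)
    (hn : 1 ≤ Fintype.card V)
    (V₁ V₂ : Finset V)
    (hV₁ : V₁ = Finset.univ.filter (fun v => 1 / Real.sqrt (Fintype.card V) ≤ p v))
    (hV₂ : V₂ = Finset.univ.filter (fun v => p v < 1 / Real.sqrt (Fintype.card V)) ∪ {d})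
    (α : ℝ) (hα : 1 ≤ α)
    (T₁ : List V) (hT₁ : IsTour V₁ T₁) (hT₁apx : cycCost c T₁ ≤ α * TSP c V₁)
    (T₂ : List V) (hT₂ : IsTour V₂ T₂)
    (T : List V)
    (hT : T = d :: ((T₁.rotate (T₁.idxOf d)).tail ++ (T₂.rotate (T₂.idxOf d)).tail)) :
    apExpect p (fun A => cycCost c (shortcut T A)) ≤
      (2 * α + 12) * Real.sqrt (Fintype.card V) * apExpect p (fun A => TSP c A) :=
  statement12_general c p hc0 htri hp0 hp1 d hd V₁ V₂ hV₁ hV₂ α hα T₁ hT₁ hT₁apx T₂ hT₂ T hT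
end
end

section
/- Let (V,c,p) and (V,c,p') be two instances of Asymmetric A Priori TSP on the same vertex set V and with the same cost function c, and let β ∈ [0,1] be such that β·p(v) ≤ p'(v) ≤ p(v) for all v ∈ V. Then for every tour T on V, E_{A∼p'}[c(T[A])] ≥ β² · E_{A∼p}[c(T[A])]. -/
noncomputable section

/-!
By linearity of expectation, the expected cost of the short-cut tour is the sum over ordered
pairs `(u, v)` of `c u v` times the probability that `v` follows `u` in `T[A]`, i.e. that `u` and
`v` are active while every vertex on the arc of `T` strictly between them is inactive. This
probability is `p u * p v * ∏ (1 - p w)` over the arc (just `p u * ∏ (1 - p w)` when `u = v`).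
Passing from `p` to `p'` shrinks the first factor by at most `β ^ 2` and does not shrink the second.
-/

open Finset

namespace List

variable {α : Type*}

theorem IsRotated.filter {l l' : List α} (p : α → Bool) (h : l ~r l') :
    l.filter p ~r l'.filter p := by
  obtain ⟨n, rfl⟩ := h
  rw [rotate_eq_drop_append_take_mod, filter_append]
  conv_lhs => rw [← take_append_drop (n % l.length) l, filter_append]
  exact isRotated_append

end List

section Lists

variable {V : Type*} [DecidableEq V]

def succPairs (l : List V) : Finset (V × V) :=
  (l.zip (l.rotate 1)).toFinset

theorem cycCost_eq_sum_succPairs (c : V → V → ℝ) {l : List V} (hl : l.Nodup) :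
    cycCost c l = ∑ e ∈ succPairs l, c e.1 e.2 := by
  have hzip : (l.zip (l.rotate 1)).Nodup := by
    apply List.Nodup.of_map Prod.fst
    rwa [List.map_fst_zip (by simp)]
  rw [succPairs, List.sum_toFinset _ hzip, cycCost, ← List.map_uncurry_zip_eq_zipWith]
  rfl

theorem succPairs_rotate (l : List V) (n : ℕ) : succPairs (l.rotate n) = succPairs l := by
  have hzip : (l.rotate n).zip ((l.rotate n).rotate 1) = (l.zip (l.rotate 1)).rotate n := by
    rw [List.rotate_rotate, add_comm, ← List.rotate_rotate]
    exact (List.zipWith_rotate_distrib _ _ _ _ (by simp)).symm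
  rw [succPairs, hzip, List.toFinset_eq_of_perm _ _ (List.rotate_perm _ _), succPairs]

theorem List.IsRotated.succPairs_eq {l l' : List V} (h : l ~r l') : succPairs l = succPairs l' := by
  obtain ⟨n, rfl⟩ := h
  exact (succPairs_rotate l n).symm

theorem fst_mem_of_mem_succPairs {l : List V} {e : V × V} (h : e ∈ succPairs l) : e.1 ∈ l :=
  (List.of_mem_zip (List.mem_toFinset.1 h)).1

theorem mk_mem_succPairs_cons_iff {u v : V} {l : List V} (hu : u ∉ l) :
    (u, v) ∈ succPairs (u :: l) ↔ v = l.headD u := by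
  cases l with
  | nil => simp [succPairs, eq_comm]
  | cons x xs =>
    have : (u, v) ∉ (x :: xs).zip (xs ++ [u]) := fun h => hu (List.of_mem_zip h).1
    simp [succPairs, this]

theorem headD_filter_mem {A : Finset V} {d : V} (hd : d ∈ A) (l : List V) :
    (l.filter (· ∈ A)).headD d ∈ A := by
  cases h : l.filter (· ∈ A) with
  | nil => exact hd
  | cons y ys =>
    have hy : y ∈ l.filter (· ∈ A) := h ▸ List.mem_cons_self
    exact of_decide_eq_true (List.mem_filter.1 hy).2

theorem headD_filter_eq_iff {A : Finset V} {d v : V} (hd : d ∈ A) :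
    ∀ {l : List V}, v ∈ d :: l →
      ((l.filter (· ∈ A)).headD d = v ↔ v ∈ A ∧ ∀ w ∈ l.takeWhile (· != v), w ∉ A)
  | [], hv => by simp_all [eq_comm]
  | x :: xs, hv => by
    by_cases hxv : x = v
    · subst hxv
      by_cases hx : x ∈ A
      · simp [hx]
      · simp only [List.filter_cons, hx, decide_false, Bool.false_eq_true, if_false]
        exact iff_of_false (fun h => hx (h ▸ headD_filter_mem hd xs)) (fun h => h.1)
    · have hv' : v ∈ d :: xs := by simp_all [eq_comm]
      by_cases hx : x ∈ A
      · simp [hx, hxv]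
      · simp only [List.filter_cons, hx, decide_false, Bool.false_eq_true, if_false,
          headD_filter_eq_iff hd hv']
        simp [hx, hxv]

/-- The vertices strictly between `u` and `v` in the cyclic order of `T`; for `u = v`, all
vertices other than `u`. -/
def arc (T : List V) (u v : V) : Finset V :=
  ((T.rotate (T.idxOf u)).tail.takeWhile (· != v)).toFinset

theorem exists_rotate_idxOf_eq_cons {T : List V} {u : V} (hu : u ∈ T) :
    ∃ rest, T.rotate (T.idxOf u) = u :: rest := by
  have hlt := List.idxOf_lt_length_iff.2 hu
  refine ⟨T.drop (T.idxOf u + 1) ++ T.take (T.idxOf u), ?_⟩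
  rw [List.rotate_eq_drop_append_take hlt.le, List.drop_eq_getElem_cons hlt,
    List.getElem_idxOf hlt, List.cons_append]

theorem disjoint_pair_arc {T : List V} (hT : T.Nodup) {u : V} (hu : u ∈ T) (v : V) :
    Disjoint {u, v} (arc T u v) := by
  obtain ⟨rest, hrest⟩ := exists_rotate_idxOf_eq_cons hu
  have hu' : u ∉ rest := (List.nodup_cons.1 (hrest ▸ List.nodup_rotate.2 hT)).1
  simp only [arc, hrest, List.tail_cons, disjoint_insert_left, disjoint_singleton_left,
    List.mem_toFinset]
  exact ⟨fun h => hu' (List.takeWhile_subset _ h),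
    fun h => by simpa using List.mem_takeWhile_imp h⟩

theorem mk_mem_succPairs_shortcut_iff {T : List V} (hT : T.Nodup) {u v : V} (hu : u ∈ T)
    (hv : v ∈ T) (A : Finset V) :
    (u, v) ∈ succPairs (shortcut T A) ↔ {u, v} ⊆ A ∧ Disjoint (arc T u v) A := by
  obtain ⟨rest, hrest⟩ := exists_rotate_idxOf_eq_cons hu
  have hrot : shortcut T A ~r shortcut (u :: rest) A :=
    hrest ▸ (List.IsRotated.forall T _).symm.filter _
  rw [hrot.succPairs_eq, insert_subset_iff, singleton_subset_iff, and_assoc]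
  by_cases huA : u ∈ A
  · have hu' : u ∉ rest.filter (· ∈ A) :=
      fun h => (List.nodup_cons.1 (hrest ▸ List.nodup_rotate.2 hT)).1 (List.mem_of_mem_filter h)
    rw [shortcut, List.filter_cons_of_pos (by simpa), mk_mem_succPairs_cons_iff hu', eq_comm,
      headD_filter_eq_iff huA (hrest ▸ (List.mem_rotate.2 hv))]
    simp [arc, hrest, huA, Finset.disjoint_left]
  · exact iff_of_false (fun h => huA (by simpa [shortcut] using fst_mem_of_mem_succPairs h))
      (fun h => huA h.1)

end Lists

section Expectation

variable {V : Type*} [Fintype V] [DecidableEq V]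

theorem apExpect_sum {ι : Type*} (q : V → ℝ) (s : Finset ι) (f : ι → Finset V → ℝ) :
    apExpect q (fun A => ∑ i ∈ s, f i A) = ∑ i ∈ s, apExpect q (f i) := by
  simp only [apExpect, mul_sum]
  exact sum_comm

theorem apExpect_const_mul (q : V → ℝ) (a : ℝ) (f : Finset V → ℝ) :
    apExpect q (fun A => a * f A) = a * apExpect q f := by
  simp only [apExpect, mul_sum]
  exact sum_congr rfl fun _ _ => by ring

theorem apExpect_prod_mul_prod_compl (q f g : V → ℝ) :
    apExpect q (fun A => (∏ v ∈ A, f v) * ∏ v ∈ Aᶜ, g v) =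
      ∏ v, (q v * f v + (1 - q v) * g v) := by
  rw [prod_add, powerset_univ, apExpect]
  refine sum_congr rfl fun A _ => ?_
  rw [← compl_eq_univ_sdiff, prod_mul_distrib, prod_mul_distrib]
  ring

theorem apExpect_indicator (q : V → ℝ) {S F : Finset V} (h : Disjoint S F) :
    apExpect q (fun A => if S ⊆ A ∧ Disjoint F A then 1 else 0) =
      (∏ v ∈ S, q v) * ∏ v ∈ F, (1 - q v) := by
  have hind : ∀ A : Finset V, (if S ⊆ A ∧ Disjoint F A then (1 : ℝ) else 0) =
      (∏ v ∈ A, if v ∉ F then 1 else 0) * ∏ v ∈ Aᶜ, if v ∉ S then 1 else 0 := by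
    intro A
    rw [prod_boole, prod_boole, ite_zero_mul_ite_zero, one_mul]
    congr 1
    simp only [subset_iff, disjoint_left, mem_compl, eq_iff_iff]
    exact ⟨fun ⟨hSA, hFA⟩ => ⟨fun v hA hF => hFA hF hA, fun v hA hS => hA (hSA hS)⟩,
      fun ⟨hAF, hAS⟩ => ⟨fun v hS => by_contra fun hA => hAS v hA hS, fun v hF hA => hAF v hA hF⟩⟩
  have hfactor : ∀ v, q v * (if v ∉ F then 1 else 0) + (1 - q v) * (if v ∉ S then 1 else 0) =
      (if v ∈ S then q v else 1) * (if v ∈ F then 1 - q v else 1) := by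
    intro v
    by_cases hS : v ∈ S
    · simp [hS, disjoint_left.1 h hS]
    · by_cases hF : v ∈ F <;> simp [hS, hF]
  simp_rw [hind]
  rw [apExpect_prod_mul_prod_compl]
  simp_rw [hfactor]
  rw [prod_mul_distrib, prod_ite_mem, prod_ite_mem, univ_inter, univ_inter]

end Expectation

theorem apExpect_cycCost_shortcut {V : Type*} [Fintype V] [DecidableEq V] (c : V → V → ℝ)
    (q : V → ℝ) {T : List V} (hT : IsTour univ T) :
    apExpect q (fun A => cycCost c (shortcut T A)) =
      ∑ e : V × V, c e.1 e.2 * ((∏ v ∈ {e.1, e.2}, q v) * ∏ v ∈ arc T e.1 e.2, (1 - q v)) := by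
  have hmem : ∀ v, v ∈ T := fun v => List.mem_toFinset.1 (hT.2 ▸ mem_univ v)
  have hcost : ∀ A, cycCost c (shortcut T A) = ∑ e : V × V,
      c e.1 e.2 * if {e.1, e.2} ⊆ A ∧ Disjoint (arc T e.1 e.2) A then 1 else 0 := by
    intro A
    have hnodup : (shortcut T A).Nodup := hT.1.filter _
    rw [cycCost_eq_sum_succPairs c hnodup]
    simp only [mul_ite, mul_one, mul_zero, ← sum_filter]
    congr 1
    ext ⟨u, v⟩
    simp [mk_mem_succPairs_shortcut_iff hT.1 (hmem u) (hmem v)]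
  simp only [hcost, apExpect_sum, apExpect_const_mul,
    apExpect_indicator q (disjoint_pair_arc hT.1 (hmem _) _)]

theorem sq_mul_prod_le_prod {V : Type*} {p p' : V → ℝ} {β : ℝ} (hβ0 : 0 ≤ β) (hβ1 : β ≤ 1)
    (hp0 : ∀ v, 0 ≤ p v) (hlow : ∀ v, β * p v ≤ p' v) {S : Finset V} (hS : #S ≤ 2) :
    β ^ 2 * ∏ v ∈ S, p v ≤ ∏ v ∈ S, p' v :=
  calc β ^ 2 * ∏ v ∈ S, p v ≤ β ^ #S * ∏ v ∈ S, p v :=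
        mul_le_mul_of_nonneg_right (pow_le_pow_of_le_one hβ0 hβ1 hS) (prod_nonneg fun v _ => hp0 v)
    _ = ∏ v ∈ S, β * p v := by rw [prod_mul_distrib, prod_const]
    _ ≤ ∏ v ∈ S, p' v := prod_le_prod (fun v _ => mul_nonneg hβ0 (hp0 v)) fun v _ => hlow v

theorem statement14_general {V : Type*} [Fintype V] [DecidableEq V]
    (c : V → V → ℝ) (p p' : V → ℝ) (β : ℝ)
    (hc0 : ∀ x y, 0 ≤ c x y)
    (hp0 : ∀ v, 0 ≤ p v) (hp1 : ∀ v, p v ≤ 1)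
    (hβ0 : 0 ≤ β) (hβ1 : β ≤ 1)
    (hlow : ∀ v, β * p v ≤ p' v) (hhigh : ∀ v, p' v ≤ p v)
    (T : List V) (hT : IsTour Finset.univ T) :
    β ^ 2 * apExpect p (fun A => cycCost c (shortcut T A)) ≤
      apExpect p' (fun A => cycCost c (shortcut T A)) := by
  rw [apExpect_cycCost_shortcut c p hT, apExpect_cycCost_shortcut c p' hT, mul_sum]
  refine sum_le_sum fun e _ => ?_
  have hpair := sq_mul_prod_le_prod hβ0 hβ1 hp0 hlow (card_le_two (a := e.1) (b := e.2))
  have harc0 : 0 ≤ ∏ v ∈ arc T e.1 e.2, (1 - p v) := prod_nonneg fun v _ => sub_nonneg.2 (hp1 v)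
  have harc : ∏ v ∈ arc T e.1 e.2, (1 - p v) ≤ ∏ v ∈ arc T e.1 e.2, (1 - p' v) :=
    prod_le_prod (fun v _ => sub_nonneg.2 (hp1 v)) fun v _ => sub_le_sub_left (hhigh v) 1
  have hpair0 : 0 ≤ β ^ 2 * ∏ v ∈ {e.1, e.2}, p v :=
    mul_nonneg (sq_nonneg β) (prod_nonneg fun v _ => hp0 v)
  calc β ^ 2 * (c e.1 e.2 * ((∏ v ∈ {e.1, e.2}, p v) * ∏ v ∈ arc T e.1 e.2, (1 - p v)))
      = c e.1 e.2 * ((β ^ 2 * ∏ v ∈ {e.1, e.2}, p v) * ∏ v ∈ arc T e.1 e.2, (1 - p v)) := by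
        ring
    _ ≤ _ := mul_le_mul_of_nonneg_left (mul_le_mul hpair harc harc0 (hpair0.trans hpair)) (hc0 _ _)

/-- decreasing each activation probability by a factor of at most `β`
decreases the expected short-cut cost of any fixed tour by a factor of at most `β²`. -/
theorem statement14 {V : Type*} [Fintype V] [DecidableEq V]
    (c : V → V → ℝ) (p p' : V → ℝ) (β : ℝ)
    (hc0 : ∀ x y, 0 ≤ c x y)
    (hcrefl : ∀ v, c v v = 0)
    (htri : ∀ x y z, c x z ≤ c x y + c y z)
    (hp0 : ∀ v, 0 ≤ p v) (hp1 : ∀ v, p v ≤ 1)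
    (hp'0 : ∀ v, 0 ≤ p' v) (hp'1 : ∀ v, p' v ≤ 1)
    (hβ0 : 0 ≤ β) (hβ1 : β ≤ 1)
    (hlow : ∀ v, β * p v ≤ p' v) (hhigh : ∀ v, p' v ≤ p v)
    (T : List V) (hT : IsTour Finset.univ T) :
    β ^ 2 * apExpect p (fun A => cycCost c (shortcut T A)) ≤
      apExpect p' (fun A => cycCost c (shortcut T A)) :=
  statement14_general c p p' β hc0 hp0 hp1 hβ0 hβ1 hlow hhigh T hT

end
end

section
/- Let V be a finite set with n := |V|, let c : V × V → ℝ≥0 satisfy c(v,v) = 0 for all v ∈ V and the triangle inequality, let D := max_{x,y∈V} c(x,y) > 0, let 1 ≤ k ≤ n−1, and set K := D/(2n³). Then there exists ĉ : V × V → ℤ≥0 with ĉ(v,v) = 0 for all v ∈ V, satisfying the triangle inequality, with ĉ(x,y) ≤ 2n³ for all x,y ∈ V, such that every tour T on V satisfies ĉ^{(k)}(T) ≤ c^{(k)}(T)/K ≤ 2·ĉ^{(k)}(T) as well as ĉ^{(k)}(T) ≥ n². -/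
/-!
Take `ĉ := ⌈a · c⌉` with `a := n³ / D`. Rounding up preserves the triangle inequality and moves each
of the `k·n` terms of a `k`-hop cost by less than one, so `a · c^{(k)}(T) ≤ ĉ^{(k)}(T) ≤
a · c^{(k)}(T) + k n`. Since `c` obeys the triangle inequality, the `1`-hop cost of any tour already
dominates `c(x, y)` for every pair, hence `c^{(k)}(T) ≥ D` and `a · c^{(k)}(T) ≥ n³ ≥ k n`, which
absorbs the rounding error into a factor `2`.
-/

noncomputable section

/-- The `k`-hop cost of a tour given as a cyclic list `v_1, …, v_n`:
`∑_{Δ=1}^{k} ∑_{i=1}^{n} c(v_i, v_{i+Δ})`, indices mod `n`. -/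
def cycHopCost {V : Type*} (c : V → V → ℝ) (k : ℕ) (l : List V) : ℝ :=
  ∑ Δ ∈ Finset.Icc 1 k, (List.zipWith c l (l.rotate Δ)).sum

open Finset

section CycHopCost

variable {V : Type*}

lemma sum_zipWith_nonneg {c : V → V → ℝ} (hc0 : ∀ x y, 0 ≤ c x y) (l l' : List V) :
    0 ≤ (List.zipWith c l l').sum := by
  rw [← List.map_uncurry_zip_eq_zipWith]
  exact List.sum_nonneg fun r hr => by
    obtain ⟨p, -, rfl⟩ := List.mem_map.1 hr
    exact hc0 p.1 p.2

lemma sum_zipWith_le_sum_zipWith {f g : V → V → ℝ} (h : ∀ x y, f x y ≤ g x y) (l l' : List V) :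
    (List.zipWith f l l').sum ≤ (List.zipWith g l l').sum := by
  simp only [← List.map_uncurry_zip_eq_zipWith]
  exact List.sum_le_sum fun p _ => h p.1 p.2

lemma sum_zipWith_mul_add (c : V → V → ℝ) (a b : ℝ) {l l' : List V}
    (h : l.length = l'.length) :
    (List.zipWith (fun x y => a * c x y + b) l l').sum =
      a * (List.zipWith c l l').sum + l.length * b := by
  simp only [← List.map_uncurry_zip_eq_zipWith, List.sum_map_add,
    List.sum_map_mul_left, List.map_const', List.sum_replicate, List.length_zip, h, min_self,
    nsmul_eq_mul, Function.uncurry_def]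

lemma sum_zipWith_rotate_rotate (c : V → V → ℝ) (l : List V) (i Δ : ℕ) :
    (List.zipWith c (l.rotate i) ((l.rotate i).rotate Δ)).sum =
      (List.zipWith c l (l.rotate Δ)).sum := by
  rw [List.rotate_rotate, add_comm, ← List.rotate_rotate,
    ← List.zipWith_rotate_distrib _ _ _ _ (l.length_rotate Δ).symm]
  exact (List.rotate_perm _ _).sum_eq

lemma cycHopCost_mono {f g : V → V → ℝ} (h : ∀ x y, f x y ≤ g x y) (k : ℕ) (l : List V) :
    cycHopCost f k l ≤ cycHopCost g k l :=
  Finset.sum_le_sum fun _ _ => sum_zipWith_le_sum_zipWith h _ _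

lemma cycHopCost_mul_add (c : V → V → ℝ) (a b : ℝ) (k : ℕ) (l : List V) :
    cycHopCost (fun x y => a * c x y + b) k l = a * cycHopCost c k l + k * l.length * b := by
  simp only [cycHopCost, sum_zipWith_mul_add c a b (l.length_rotate _).symm,
    Finset.sum_add_distrib, Finset.mul_sum, Finset.sum_const, Nat.card_Icc, nsmul_eq_mul]
  push_cast
  ring

lemma cycHopCost_const_mul (c : V → V → ℝ) (a : ℝ) (k : ℕ) (l : List V) :
    cycHopCost (fun x y => a * c x y) k l = a * cycHopCost c k l := by
  simpa using cycHopCost_mul_add c a 0 k l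

variable {c : V → V → ℝ} (hc0 : ∀ x y, 0 ≤ c x y) (htri : ∀ x y z, c x z ≤ c x y + c y z)
include hc0 htri

lemma le_sum_zipWith_path {b y : V} :
    ∀ (x : V) (s : List V), b ∈ s ++ [y] → c x b ≤ (List.zipWith c (x :: s) (s ++ [y])).sum
  | x, [], hb => by simp_all
  | x, z :: s, hb => by
    rw [List.cons_append, List.zipWith_cons_cons, List.sum_cons]
    rw [List.cons_append, List.mem_cons] at hb
    rcases hb with rfl | hb
    · linarith [sum_zipWith_nonneg hc0 (b :: s) (s ++ [y])]
    · linarith [htri x z b, le_sum_zipWith_path z s hb]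

/-- Rotate the tour so that it starts at `a`, then walk from `a` to `b` along it. -/
lemma le_sum_zipWith_rotate_one {l : List V} {a b : V} (ha : a ∈ l) (hb : b ∈ l) :
    c a b ≤ (List.zipWith c l (l.rotate 1)).sum := by
  obtain ⟨p, q, rfl⟩ := List.append_of_mem ha
  rw [← sum_zipWith_rotate_rotate c _ p.length, List.rotate_append_length_eq, List.cons_append,
    List.rotate_cons_succ _ _ 0, List.rotate_zero]
  refine le_sum_zipWith_path hc0 htri a (q ++ p) ?_
  simp only [List.mem_append, List.mem_cons] at hb ⊢
  tauto

lemma le_cycHopCost {k : ℕ} (hk : 1 ≤ k) {l : List V} {a b : V} (ha : a ∈ l) (hb : b ∈ l) :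
    c a b ≤ cycHopCost c k l :=
  (le_sum_zipWith_rotate_one hc0 htri ha hb).trans <|
    Finset.single_le_sum (fun _ _ => sum_zipWith_nonneg hc0 _ _) (mem_Icc.2 ⟨le_rfl, hk⟩)

end CycHopCost

lemma IsTour.length_eq_card {V : Type*} [DecidableEq V] {A : Finset V} {l : List V}
    (h : IsTour A l) : l.length = A.card := by
  rw [← h.2, List.toFinset_card_of_nodup h.1]

lemma IsTour.mem {V : Type*} [DecidableEq V] {A : Finset V} {l : List V} (h : IsTour A l)
    {x : V} (hx : x ∈ A) : x ∈ l :=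
  List.mem_toFinset.1 (h.2 ▸ hx)

section ScaledCeil

variable {V : Type*}

def scaledCeil (a : ℝ) (c : V → V → ℝ) (x y : V) : ℕ :=
  ⌈a * c x y⌉₊

variable {a : ℝ} {c : V → V → ℝ}

lemma scaledCeil_self {v : V} (h : c v v = 0) : scaledCeil a c v v = 0 := by
  simp [scaledCeil, h]

lemma scaledCeil_triangle (ha : 0 ≤ a) (htri : ∀ x y z, c x z ≤ c x y + c y z) (x y z : V) :
    scaledCeil a c x z ≤ scaledCeil a c x y + scaledCeil a c y z :=
  calc ⌈a * c x z⌉₊ ≤ ⌈a * c x y + a * c y z⌉₊ :=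
        Nat.ceil_le_ceil (by rw [← mul_add]; exact mul_le_mul_of_nonneg_left (htri x y z) ha)
    _ ≤ ⌈a * c x y⌉₊ + ⌈a * c y z⌉₊ := Nat.ceil_add_le _ _

lemma mul_cycHopCost_le_cycHopCost_scaledCeil (k : ℕ) (l : List V) :
    a * cycHopCost c k l ≤ cycHopCost (fun x y => (scaledCeil a c x y : ℝ)) k l := by
  rw [← cycHopCost_const_mul]
  exact cycHopCost_mono (fun x y => Nat.le_ceil _) k l

lemma cycHopCost_scaledCeil_le (ha : 0 ≤ a) (hc0 : ∀ x y, 0 ≤ c x y) (k : ℕ) (l : List V) :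
    cycHopCost (fun x y => (scaledCeil a c x y : ℝ)) k l ≤ a * cycHopCost c k l + k * l.length := by
  simpa [scaledCeil, cycHopCost_mul_add] using
    cycHopCost_mono (fun x y => (Nat.ceil_lt_add_one (mul_nonneg ha (hc0 x y))).le) k l

end ScaledCeil

/-- given a metric cost `c` with maximum value `D > 0` and `1 ≤ k ≤ n − 1`,
setting `K := D/(2n³)`, there is a nonnegative-integer-valued metric `ĉ` bounded by `2n³`
such that every tour `T` satisfies `ĉ^{(k)}(T) ≤ c^{(k)}(T)/K ≤ 2·ĉ^{(k)}(T)` and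
`ĉ^{(k)}(T) ≥ n²`. -/
theorem statement16 {V : Type*} [Fintype V] [DecidableEq V]
    (c : V → V → ℝ) (k : ℕ) (D : ℝ)
    (hc0 : ∀ x y, 0 ≤ c x y)
    (hcrefl : ∀ v, c v v = 0)
    (htri : ∀ x y z, c x z ≤ c x y + c y z)
    (hDub : ∀ x y, c x y ≤ D) (hDatt : ∃ x y, c x y = D) (hD : 0 < D)
    (hk1 : 1 ≤ k) (hkn : k ≤ Fintype.card V - 1) :
    ∃ chat : V → V → ℕ,
      (∀ v, chat v v = 0) ∧
      (∀ x y z, chat x z ≤ chat x y + chat y z) ∧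
      (∀ x y, chat x y ≤ 2 * Fintype.card V ^ 3) ∧
      ∀ T : List V, IsTour Finset.univ T →
        cycHopCost (fun x y => (chat x y : ℝ)) k T ≤
            cycHopCost c k T / (D / (2 * (Fintype.card V : ℝ) ^ 3)) ∧
        cycHopCost c k T / (D / (2 * (Fintype.card V : ℝ) ^ 3)) ≤
            2 * cycHopCost (fun x y => (chat x y : ℝ)) k T ∧
        (Fintype.card V : ℝ) ^ 2 ≤ cycHopCost (fun x y => (chat x y : ℝ)) k T := by
  set n := Fintype.card V
  set a : ℝ := n ^ 3 / D
  have ha : 0 ≤ a := by positivity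
  have haD : a * D = n ^ 3 := div_mul_cancel₀ _ hD.ne'
  have hkn3 : (k * n : ℝ) ≤ n ^ 3 := by
    have : k * n ≤ n ^ 3 := calc
      k * n ≤ n * n := Nat.mul_le_mul_right _ (by omega)
      _ ≤ n ^ 3 := by rw [← sq]; exact Nat.pow_le_pow_right (by omega) (by norm_num)
    exact_mod_cast this
  have hn23 : (n : ℝ) ^ 2 ≤ n ^ 3 := pow_le_pow_right₀ (by norm_cast; omega) (by norm_num)
  refine ⟨scaledCeil a c, fun v => scaledCeil_self (hcrefl v), scaledCeil_triangle ha htri,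
    fun x y => Nat.ceil_le.2 ?_, fun T hT => ?_⟩
  · push_cast
    linarith [mul_le_mul_of_nonneg_left (hDub x y) ha, pow_nonneg (Nat.cast_nonneg (α := ℝ) n) 3]
  have hDS : D ≤ cycHopCost c k T := by
    obtain ⟨x, y, rfl⟩ := hDatt
    exact le_cycHopCost hc0 htri hk1 (hT.mem (mem_univ x)) (hT.mem (mem_univ y))
  have hnS : (n : ℝ) ^ 3 ≤ a * cycHopCost c k T := haD ▸ mul_le_mul_of_nonneg_left hDS ha
  have hlow := mul_cycHopCost_le_cycHopCost_scaledCeil (a := a) (c := c) k T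
  have hup := cycHopCost_scaledCeil_le ha hc0 k T
  rw [hT.length_eq_card, card_univ] at hup
  have hK : cycHopCost c k T / (D / (2 * (n : ℝ) ^ 3)) = 2 * (a * cycHopCost c k T) := by
    field_simp
    rw [mul_assoc, mul_comm D, haD]
  rw [hK]
  exact ⟨by linarith, by linarith, by linarith⟩

end
end

section
/- Let V be a finite set, let c : V × V → ℝ≥0 satisfy the triangle inequality c(x,z) ≤ c(x,y) + c(y,z) for all x,y,z ∈ V, let k ≥ 1, let D ≥ 0, and let H ⊆ V be a set with c(x,y) ≤ D for all x,y ∈ H. Let W_main = w_1,…,w_t be a walk on V, let W_sub = w_{s+1},…,w_{s+k} be a subwalk of W_main consisting of k consecutive visits (0 ≤ s ≤ t−k) with {w_{s+1},…,w_{s+k}} ⊆ H, and let Q = q_1,…,q_m be a walk all of whose vertices lie in H. Let W'_main := w_1,…,w_s, q_1,…,q_m, w_{s+1},…,w_t be the walk obtained from W_main by inserting Q right before the start of W_sub. Then c^{(k)}(W'_main) ≤ c^{(k)}(W_main) + c^{(k)}(Q) + 2k²D. -/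
noncomputable section

/-- The `k`-hop cost of a (non-closed) walk `w_1, …, w_t` (repeated vertices allowed):
`∑_{Δ=1}^{k} ∑_{i=1}^{t-Δ} c(w_i, w_{i+Δ})`. -/
def walkHopCost {V : Type*} (c : V → V → ℝ) (k : ℕ) (l : List V) : ℝ :=
  ∑ Δ ∈ Finset.Icc 1 k, (List.zipWith c l (l.drop Δ)).sum

/-!
Split the `k`-hop cost into the layers of pairs exactly `Δ = 1, …, k` steps apart. In a layer,
a pair of the new walk that starts before the insertion point and ends in `Q` or in `W_sub` is
compared with the pair of `W_main` at the same two positions: both right ends lie in `H`, so by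
the triangle inequality it costs at most `D` more. A pair from `Q` into `W_sub` costs at most `D`.
There are at most `Δ ≤ k` pairs of each kind per layer, hence `2k²D` in total.
-/

section

variable {V : Type*}

def hopCostAt (c : V → V → ℝ) (Δ : ℕ) (l : List V) : ℝ :=
  (List.zipWith c l (l.drop Δ)).sum

theorem walkHopCost_eq_sum_hopCostAt (c : V → V → ℝ) (k : ℕ) (l : List V) :
    walkHopCost c k l = ∑ Δ ∈ Finset.Icc 1 k, hopCostAt c Δ l :=
  rfl

@[simp]
theorem hopCostAt_nil (c : V → V → ℝ) (Δ : ℕ) : hopCostAt c Δ [] = 0 := by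
  simp [hopCostAt]

theorem hopCostAt_cons (c : V → V → ℝ) (Δ : ℕ) (x : V) (l : List V) :
    hopCostAt c Δ (x :: l) = ((x :: l)[Δ]?.map (c x)).getD 0 + hopCostAt c Δ l := by
  have hdrop : l.drop Δ = ((x :: l).drop Δ).tail := by
    rw [List.tail_drop, List.drop_succ_cons]
  rw [hopCostAt, hopCostAt, hdrop, ← List.head?_drop]
  generalize (x :: l).drop Δ = m
  cases m <;> simp

theorem mem_of_getElem?_of_forall_mem_take {H : Set V} {l : List V} {Δ i : ℕ} {v : V}
    (hl : ∀ v ∈ l.take Δ, v ∈ H) (hi : i < Δ) (hv : l[i]? = some v) : v ∈ H :=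
  hl v (List.mem_of_getElem? (by rwa [List.getElem?_take, if_pos hi]))

theorem hopCostAt_append_left_le {c : V → V → ℝ} {H : Set V} {D : ℝ} {Δ : ℕ}
    (htri : ∀ x y z, c x z ≤ c x y + c y z) (hH : ∀ x ∈ H, ∀ y ∈ H, c x y ≤ D)
    (A L L' : List V) (hL : Δ ≤ L.length) (hL' : Δ ≤ L'.length)
    (hLH : ∀ v ∈ L.take Δ, v ∈ H) (hL'H : ∀ v ∈ L'.take Δ, v ∈ H) :
    hopCostAt c Δ (A ++ L') + hopCostAt c Δ L ≤
      hopCostAt c Δ (A ++ L) + hopCostAt c Δ L' + (min A.length Δ : ℕ) * D := by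
  induction A with
  | nil => simp [add_comm]
  | cons a A ih =>
    have step := fun M => hopCostAt_cons c Δ a (A ++ M)
    simp only [← List.cons_append] at step
    rw [step L', step L]
    rcases lt_or_ge Δ (a :: A).length with hΔ | hΔ
    · rw [List.getElem?_append_left hΔ, List.getElem?_append_left hΔ]
      simp only [List.length_cons] at hΔ ⊢
      rw [min_eq_right (by omega : Δ ≤ A.length + 1)]
      rw [min_eq_right (by omega : Δ ≤ A.length)] at ih
      linarith
    · rw [List.getElem?_append_right hΔ, List.getElem?_append_right hΔ]
      simp only [List.length_cons] at hΔ ⊢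
      obtain ⟨x, hx⟩ : ∃ x, L[Δ - (A.length + 1)]? = some x :=
        ⟨_, List.getElem?_eq_getElem (by omega)⟩
      obtain ⟨x', hx'⟩ : ∃ x', L'[Δ - (A.length + 1)]? = some x' :=
        ⟨_, List.getElem?_eq_getElem (by omega)⟩
      have hxx' : c x x' ≤ D :=
        hH x (mem_of_getElem?_of_forall_mem_take hLH (by omega) hx)
          x' (mem_of_getElem?_of_forall_mem_take hL'H (by omega) hx')
      rw [hx, hx', min_eq_left (by omega)]
      rw [min_eq_left (by omega)] at ih
      simp only [Option.map_some, Option.getD_some]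
      push_cast
      linarith [htri a x x']

theorem hopCostAt_append_le {c : V → V → ℝ} {H : Set V} {D : ℝ} {Δ : ℕ}
    (hH : ∀ x ∈ H, ∀ y ∈ H, c x y ≤ D) (hD : 0 ≤ D)
    (Q L : List V) (hQ : ∀ v ∈ Q, v ∈ H) (hLH : ∀ v ∈ L.take Δ, v ∈ H) :
    hopCostAt c Δ (Q ++ L) ≤
      hopCostAt c Δ Q + hopCostAt c Δ L + (min Q.length Δ : ℕ) * D := by
  induction Q with
  | nil => simp
  | cons q Q ih =>
    have ih := ih fun v hv => hQ v (List.mem_cons_of_mem q hv)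
    have step := hopCostAt_cons c Δ q (Q ++ L)
    simp only [← List.cons_append] at step
    rw [step, hopCostAt_cons]
    rcases lt_or_ge Δ (q :: Q).length with hΔ | hΔ
    · rw [List.getElem?_append_left hΔ]
      simp only [List.length_cons] at hΔ ⊢
      rw [min_eq_right (by omega : Δ ≤ Q.length + 1)]
      rw [min_eq_right (by omega : Δ ≤ Q.length)] at ih
      linarith
    · rw [List.getElem?_append_right hΔ, List.getElem?_eq_none hΔ]
      simp only [List.length_cons] at hΔ ⊢
      have hterm : (L[Δ - (Q.length + 1)]?.map (c q)).getD 0 ≤ D := by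
        cases hx : L[Δ - (Q.length + 1)]? with
        | none => simpa
        | some x =>
          exact hH q (hQ q List.mem_cons_self) x
            (mem_of_getElem?_of_forall_mem_take hLH (by omega) hx)
      rw [min_eq_left (by omega)]
      rw [min_eq_left (by omega)] at ih
      simp only [Option.map_none, Option.getD_none]
      push_cast
      linarith

theorem hopCostAt_insert_le {c : V → V → ℝ} {H : Set V} {D : ℝ} {Δ : ℕ}
    (htri : ∀ x y z, c x z ≤ c x y + c y z) (hH : ∀ x ∈ H, ∀ y ∈ H, c x y ≤ D) (hD : 0 ≤ D)
    (A Q B : List V) (hQ : ∀ v ∈ Q, v ∈ H) (hB : Δ ≤ B.length)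
    (hBH : ∀ v ∈ B.take Δ, v ∈ H) :
    hopCostAt c Δ (A ++ Q ++ B) ≤
      hopCostAt c Δ (A ++ B) + hopCostAt c Δ Q + 2 * Δ * D := by
  have hQBH : ∀ v ∈ (Q ++ B).take Δ, v ∈ H := by
    intro v hv
    rw [List.take_append] at hv
    rcases List.mem_append.1 hv with hv | hv
    · exact hQ v (List.mem_of_mem_take hv)
    · exact hBH v (List.take_subset_take_left _ (Nat.sub_le _ _) hv)
  have hleft := hopCostAt_append_left_le htri hH A B (Q ++ B) hB
    (by rw [List.length_append]; omega) hBH hQBH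
  have hright := hopCostAt_append_le hH hD Q B hQ hBH
  have hminA : ((min A.length Δ : ℕ) : ℝ) * D ≤ Δ * D :=
    mul_le_mul_of_nonneg_right (by exact_mod_cast min_le_right _ _) hD
  have hminQ : ((min Q.length Δ : ℕ) : ℝ) * D ≤ Δ * D :=
    mul_le_mul_of_nonneg_right (by exact_mod_cast min_le_right _ _) hD
  rw [List.append_assoc]
  linarith

end

theorem statement17_general {V : Type*}
    (c : V → V → ℝ) (k : ℕ)
    (D : ℝ) (hD : 0 ≤ D)
    (htri : ∀ x y z, c x z ≤ c x y + c y z)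
    (H : Set V) (hH : ∀ x ∈ H, ∀ y ∈ H, c x y ≤ D)
    (Wmain : List V) (s : ℕ) (hs : s + k ≤ Wmain.length)
    (hsub : ∀ v ∈ (Wmain.drop s).take k, v ∈ H)
    (Q : List V) (hQ : ∀ v ∈ Q, v ∈ H) :
    walkHopCost c k (Wmain.take s ++ Q ++ Wmain.drop s) ≤
      walkHopCost c k Wmain + walkHopCost c k Q + 2 * k ^ 2 * D := by
  simp only [walkHopCost_eq_sum_hopCostAt]
  calc _ ≤ ∑ Δ ∈ Finset.Icc 1 k, (hopCostAt c Δ Wmain + hopCostAt c Δ Q + 2 * k * D) := by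
        refine Finset.sum_le_sum fun Δ hΔ => ?_
        have hΔk : Δ ≤ k := (Finset.mem_Icc.1 hΔ).2
        have hlayer := hopCostAt_insert_le htri hH hD (Wmain.take s) Q (Wmain.drop s) hQ
          (by rw [List.length_drop]; omega)
          (fun v hv => hsub v (List.take_subset_take_left _ hΔk hv))
        rw [List.take_append_drop] at hlayer
        have hΔD : (Δ : ℝ) * D ≤ k * D := mul_le_mul_of_nonneg_right (by exact_mod_cast hΔk) hD
        linarith
    _ = _ := by
        rw [Finset.sum_add_distrib, Finset.sum_add_distrib, Finset.sum_const, Nat.card_Icc,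
          nsmul_eq_mul]
        push_cast
        ring

/-- inserting a walk `Q` with vertices in `H` right before `k` consecutive
visits of `W_main` that all lie in `H` (where all costs within `H` are at most `D`)
increases the `k`-hop cost by at most `c^{(k)}(Q) + 2k²D`. -/
theorem statement17 {V : Type*}
    (c : V → V → ℝ) (k : ℕ) (hk : 1 ≤ k)
    (D : ℝ) (hD : 0 ≤ D)
    (hc0 : ∀ x y, 0 ≤ c x y)
    (htri : ∀ x y z, c x z ≤ c x y + c y z)
    (H : Set V) (hH : ∀ x ∈ H, ∀ y ∈ H, c x y ≤ D)
    (Wmain : List V) (s : ℕ) (hs : s + k ≤ Wmain.length)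
    (hsub : ∀ v ∈ (Wmain.drop s).take k, v ∈ H)
    (Q : List V) (hQ : ∀ v ∈ Q, v ∈ H) :
    walkHopCost c k (Wmain.take s ++ Q ++ Wmain.drop s) ≤
      walkHopCost c k Wmain + walkHopCost c k Q + 2 * k ^ 2 * D :=
  statement17_general c k D hD htri H hH Wmain s hs hsub Q hQ
end
end

section
/- Let V be a finite set equipped with a linear order ≺, let k ≥ 1, and let c : V × V → ℝ≥0 satisfy c(x,y) ≤ c(y,x) whenever x ≺ y (as holds for forward versus backward edges in a hierarchically ordered instance). Let P be a path with at most k+1 vertices, and let P_sorted be the path on the same vertex set that visits its vertices in ≺-increasing order (so that it consists only of forward edges). Then c^{(k)}(P_sorted) ≤ c^{(k)}(P). -/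
/-!
When the walk has at most `k + 1` vertices, every pair of positions is at most `k` hops apart,
so its `k`-hop cost is the sum of `c` over all ordered pairs of positions `i < j`. For the sorted
path every such pair is a forward edge, so its cost is the sum of the symmetrised cost
`c (min x y) (max x y)` over the vertex set, which does not depend on the order of the vertices;
for any other ordering each term can only grow, since `c x y ≤ c y x` for `x < y`.
-/

noncomputable section

namespace List

variable {α M : Type*}

/-- `pairSum f [a₁, …, aₙ] = ∑_{i < j} f aᵢ aⱼ`. -/
def pairSum [AddCommMonoid M] (f : α → α → M) : List α → M
  | [] => 0
  | a :: t => (t.map (f a)).sum + pairSum f t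

theorem pairSum_perm [AddCommMonoid M] {f : α → α → M} (hf : ∀ x y, f x y = f y x)
    {l l' : List α} (h : l.Perm l') : pairSum f l = pairSum f l' := by
  induction h with
  | nil => rfl
  | cons a h ih => simp only [pairSum, ih, (h.map (f a)).sum_eq]
  | swap a b t =>
    simp only [pairSum, map_cons, sum_cons, hf a b]
    abel
  | trans _ _ ih₁ ih₂ => rw [ih₁, ih₂]

theorem pairSum_congr_of_pairwise [AddCommMonoid M] {R : α → α → Prop} {f g : α → α → M}
    (h : ∀ x y, R x y → f x y = g x y) {l : List α} (hl : l.Pairwise R) :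
    pairSum f l = pairSum g l := by
  induction l with
  | nil => rfl
  | cons a t ih =>
    rw [pairwise_cons] at hl
    simp only [pairSum, ih hl.2, map_congr_left fun x hx => h a x (hl.1 x hx)]

theorem pairSum_le_pairSum [AddCommMonoid M] [PartialOrder M] [IsOrderedAddMonoid M]
    {f g : α → α → M} (h : ∀ x y, f x y ≤ g x y) (l : List α) : pairSum f l ≤ pairSum g l := by
  induction l with
  | nil => rfl
  | cons a t ih => exact add_le_add (sum_le_sum fun x _ => h a x) ih

theorem sum_zipWith_cons_drop [AddMonoid M] (f : α → α → M) (a : α) (t : List α) (d : ℕ) :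
    (zipWith f (a :: t) (t.drop d)).sum
      = (((t.drop d).take 1).map (f a)).sum + (zipWith f t (t.drop (d + 1))).sum := by
  rw [drop_add_one_eq_tail_drop]
  cases t.drop d <;> simp

end List

open List

section HopCost

variable {V : Type*} (c : V → V → ℝ)

theorem walkHopCost_succ (k : ℕ) (l : List V) :
    walkHopCost c (k + 1) l = walkHopCost c k l + (zipWith c l (l.drop (k + 1))).sum :=
  Finset.sum_Icc_succ_top (by omega) _

theorem walkHopCost_cons (k : ℕ) (a : V) (t : List V) :
    walkHopCost c k (a :: t) = ((t.take k).map (c a)).sum + walkHopCost c k t := by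
  induction k with
  | zero => simp [walkHopCost]
  | succ k ih =>
    rw [walkHopCost_succ, walkHopCost_succ, ih, drop_succ_cons, sum_zipWith_cons_drop,
      take_add, map_append, sum_append]
    ring

theorem walkHopCost_eq_pairSum {k : ℕ} {l : List V} (hl : l.length ≤ k + 1) :
    walkHopCost c k l = pairSum c l := by
  induction l with
  | nil => simp [walkHopCost, pairSum]
  | cons a t ih =>
    have ht : t.length ≤ k := by simpa using hl
    rw [walkHopCost_cons, take_of_length_le ht, ih (by omega), pairSum]

end HopCost

theorem statement18_general {V : Type*} [LinearOrder V]
    (c : V → V → ℝ) (k : ℕ)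
    (hcmono : ∀ x y, x < y → c x y ≤ c y x)
    (P Q : List V)
    (hlen : P.length ≤ k + 1)
    (hperm : Q.Perm P) (hsorted : Q.Pairwise (· < ·)) :
    walkHopCost c k Q ≤ walkHopCost c k P := by
  set cSym : V → V → ℝ := fun x y => c (min x y) (max x y)
  have hsymm : ∀ x y, cSym x y = cSym y x := fun x y => by
    simp only [cSym, min_comm, max_comm]
  have hforward : ∀ x y, x < y → c x y = cSym x y := fun x y hxy => by
    simp [cSym, hxy.le]
  have hle : ∀ x y, cSym x y ≤ c x y := fun x y => by
    rcases le_or_gt x y with hxy | hxy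
    · simp [cSym, hxy]
    · simpa [cSym, hxy.le] using hcmono y x hxy
  calc walkHopCost c k Q = pairSum c Q := walkHopCost_eq_pairSum c (hperm.length_eq ▸ hlen)
    _ = pairSum cSym Q := pairSum_congr_of_pairwise hforward hsorted
    _ = pairSum cSym P := pairSum_perm hsymm hperm
    _ ≤ pairSum c P := pairSum_le_pairSum hle P
    _ = walkHopCost c k P := (walkHopCost_eq_pairSum c hlen).symm

/-- if forward edges are no more expensive than backward edges
(`c x y ≤ c y x` for `x ≺ y`) and `P` is a path on at most `k+1` vertices, then sorting the
vertices of `P` in increasing order does not increase the `k`-hop cost. -/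
theorem statement18 {V : Type*} [LinearOrder V]
    (c : V → V → ℝ) (k : ℕ) (hk : 1 ≤ k)
    (hc0 : ∀ x y, 0 ≤ c x y)
    (hcmono : ∀ x y, x < y → c x y ≤ c y x)
    (P Q : List V) (hP : P.Nodup)
    (hlen : P.length ≤ k + 1)
    (hperm : Q.Perm P) (hsorted : Q.Pairwise (· < ·)) :
    walkHopCost c k Q ≤ walkHopCost c k P :=
  statement18_general c k hcmono P Q hlen hperm hsorted

end
end
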